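/- arXiv:2501.06020 — 3 statements merged into one kernel-verified Lean document; each statement's English description precedes it below -/
import Mathlib

section
/- For 0 < r, the circle average of a continuous function f on the circle C(0,r) = {z ∈ ℂ : |z| = r}, defined as f_r(0) = (1/2π)∫₀^{2π} f(r·e^{it}) dt, satisfies: if f is C² on an open set containing the closed annulus {z : r ≤ |z| ≤ R} with 0 < r < R, then f_r(0) − f_R(0) = (1/2π) ∫_{r ≤ |z| ≤ R} ∇f(z) · ∇G_0(z) dA(z), where G_0(z) = −ln|z| and dA is Lebesgue measure on ℝ². -/
noncomputable section
open MeasureTheory Real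

/-- Euclidean dot product of the gradients of two functions on `ℂ ≅ ℝ²`. -/
def gradDot (f g : ℂ → ℝ) (z : ℂ) : ℝ :=
    fderiv ℝ f z 1 * fderiv ℝ g z 1 +
    fderiv ℝ f z Complex.I * fderiv ℝ g z Complex.I



lemma negLogAbs_eq : (fun w : ℂ => -Real.log (‖w‖))
    = fun w => -(1/2) * Real.log (Complex.normSq w) := by
  funext w
  rw [Complex.norm_def, Real.log_sqrt (Complex.normSq_nonneg w)]
  ring

lemma hasFDerivAt_negLogAbs (z : ℂ) (hz : z ≠ 0) :
    HasFDerivAt (fun w : ℂ => -Real.log (‖w‖))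
      ((-(1/2) : ℝ) • ((Complex.normSq z)⁻¹ •
        (z.re • Complex.reCLM + z.re • Complex.reCLM +
          (z.im • Complex.imCLM + z.im • Complex.imCLM)))) z := by
  rw [negLogAbs_eq]
  have hre := (Complex.reCLM.hasFDerivAt (x := z))
  have him := (Complex.imCLM.hasFDerivAt (x := z))
  have h1 : HasFDerivAt (fun w : ℂ => Complex.normSq w)
      (z.re • Complex.reCLM + z.re • Complex.reCLM +
        (z.im • Complex.imCLM + z.im • Complex.imCLM)) z := by
    have := (hre.mul hre).add (him.mul him)
    exact this.congr_of_eventuallyEq (Filter.Eventually.of_forall fun w => by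
      simp [Complex.normSq_apply])
  have h2 := h1.log (by simpa using Complex.normSq_pos.mpr hz |>.ne')
  exact h2.const_mul (-(1/2))

lemma fderiv_negLogAbs_apply (z : ℂ) (hz : z ≠ 0) (v : ℂ) :
    fderiv ℝ (fun w : ℂ => -Real.log (‖w‖)) z v
      = -((z.re * v.re + z.im * v.im) / Complex.normSq z) := by
  rw [(hasFDerivAt_negLogAbs z hz).fderiv]
  have hν : Complex.normSq z ≠ 0 := by simpa using Complex.normSq_pos.mpr hz |>.ne'
  simp only [ContinuousLinearMap.smul_apply, ContinuousLinearMap.add_apply,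
    Complex.reCLM_apply, Complex.imCLM_apply, smul_eq_mul]
  field_simp
  ring

lemma expI_eq (t : ℝ) :
    Complex.exp (Complex.I * t) = (Real.cos t : ℂ) + (Real.sin t : ℂ) * Complex.I := by
  rw [mul_comm, Complex.exp_mul_I]
  simp [Complex.ofReal_cos, Complex.ofReal_sin]

lemma symm_eq (ρ θ : ℝ) :
    Complex.polarCoord.symm (ρ, θ) = (ρ : ℂ) * Complex.exp (Complex.I * θ) := by
  rw [Complex.polarCoord_symm_apply, expI_eq]

lemma re_mul_exp (ρ θ : ℝ) : ((ρ : ℂ) * Complex.exp (Complex.I * θ)).re = ρ * Real.cos θ := by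
  rw [expI_eq]; simp [Complex.cos_ofReal_re, Complex.sin_ofReal_re]

lemma im_mul_exp (ρ θ : ℝ) : ((ρ : ℂ) * Complex.exp (Complex.I * θ)).im = ρ * Real.sin θ := by
  rw [expI_eq]; simp [Complex.cos_ofReal_re, Complex.sin_ofReal_re]

lemma normSq_mul_exp (ρ θ : ℝ) :
    Complex.normSq ((ρ : ℂ) * Complex.exp (Complex.I * θ)) = ρ ^ 2 := by
  rw [Complex.normSq_apply, re_mul_exp, im_mul_exp]
  have := Real.sin_sq_add_cos_sq θ
  nlinarith [Real.sin_sq_add_cos_sq θ]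

lemma mul_exp_ne_zero {ρ : ℝ} (hρ : 0 < ρ) (θ : ℝ) :
    (ρ : ℂ) * Complex.exp (Complex.I * θ) ≠ 0 :=
  mul_ne_zero (by exact_mod_cast hρ.ne') (Complex.exp_ne_zero _)


lemma radial_hasDerivAt (f : ℂ → ℝ) {ρ : ℝ} (θ : ℝ) (hρ : 0 < ρ)
    (hd : DifferentiableAt ℝ f ((ρ : ℂ) * Complex.exp (Complex.I * θ))) :
    HasDerivAt (fun s : ℝ => -f ((s : ℂ) * Complex.exp (Complex.I * θ)))
      (ρ * gradDot f (fun w => -Real.log (‖w‖))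
        ((ρ : ℂ) * Complex.exp (Complex.I * θ))) ρ := by
  set e := Complex.exp (Complex.I * θ) with he
  set z := (ρ : ℂ) * e with hzdef
  have hz : z ≠ 0 := mul_exp_ne_zero hρ θ
  have hmap : HasDerivAt (fun s : ℝ => (s : ℂ) * e) e ρ := by
    have h := (hasDerivAt_id ρ).smul_const e
    simp only [one_smul] at h
    have : (fun s : ℝ => (s : ℂ) * e) = fun s : ℝ => s • e := by
      funext s; rw [Complex.real_smul]
    rw [this]
    exact h
  have hcomp : HasDerivAt (fun s : ℝ => f ((s : ℂ) * e)) (fderiv ℝ f z e) ρ :=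
    hd.hasFDerivAt.comp_hasDerivAt ρ hmap
  have hkey : ρ * gradDot f (fun w => -Real.log (‖w‖)) z = -(fderiv ℝ f z e) := by
    have hdecomp : e = (Real.cos θ : ℝ) • (1 : ℂ) + (Real.sin θ : ℝ) • Complex.I := by
      rw [he, expI_eq]
      simp [Complex.real_smul]
    have hfe : fderiv ℝ f z e
        = Real.cos θ * fderiv ℝ f z 1 + Real.sin θ * fderiv ℝ f z Complex.I := by
      conv_lhs => rw [hdecomp]
      rw [map_add, (fderiv ℝ f z).map_smul, (fderiv ℝ f z).map_smul,
        smul_eq_mul, smul_eq_mul]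
    rw [hfe]
    unfold gradDot
    rw [fderiv_negLogAbs_apply z hz, fderiv_negLogAbs_apply z hz]
    rw [hzdef, re_mul_exp, im_mul_exp, normSq_mul_exp]
    simp only [Complex.one_re, Complex.one_im, Complex.I_re, Complex.I_im]
    field_simp
    ring
  have := hcomp.neg
  rw [hkey]
  exact this

lemma symm_eq' (p : ℝ × ℝ) :
    Complex.polarCoord.symm p = (p.1 : ℂ) * Complex.exp (Complex.I * p.2) := symm_eq p.1 p.2

lemma abs_mul_exp {ρ : ℝ} (hρ : 0 ≤ ρ) (θ : ℝ) :
    ‖(ρ : ℂ) * Complex.exp (Complex.I * θ)‖ = ρ := by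
  rw [Complex.norm_def, normSq_mul_exp, Real.sqrt_sq hρ]

/-- for `0 < r < R` and `f` of class `C²` on an open set containing the
closed annulus `{r ≤ |z| ≤ R}`, the difference of circle averages of `f` equals the
Dirichlet pairing of `f` with `G₀(z) = -ln |z|` over the annulus. -/
theorem circle_average_difference (r R : ℝ) (hr : 0 < r) (hrR : r < R)
    (f : ℂ → ℝ) (U : Set ℂ) (hU : IsOpen U)
    (hsub : {z : ℂ | r ≤ ‖z‖ ∧ ‖z‖ ≤ R} ⊆ U)
    (hf : ContDiffOn ℝ 2 f U) :
    (1 / (2 * π)) * (∫ t in (0:ℝ)..(2 * π), f ((r : ℂ) * Complex.exp (Complex.I * t))) -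
    (1 / (2 * π)) * (∫ t in (0:ℝ)..(2 * π), f ((R : ℂ) * Complex.exp (Complex.I * t))) =
    (1 / (2 * π)) * ∫ z in {z : ℂ | r ≤ ‖z‖ ∧ ‖z‖ ≤ R},
      gradDot f (fun w => -Real.log (‖w‖)) z := by
  have hπ : 0 < π := Real.pi_pos
  have hRpos : 0 < R := hr.trans hrR
  set A : Set ℂ := {z : ℂ | r ≤ ‖z‖ ∧ ‖z‖ ≤ R} with hA
  set g : ℂ → ℝ := gradDot f (fun w => -Real.log (‖w‖)) with hg
  -- membership helper
  have hmemA : ∀ {ρ : ℝ}, ρ ∈ Set.Icc r R → ∀ θ : ℝ,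
      (ρ : ℂ) * Complex.exp (Complex.I * θ) ∈ A := by
    intro ρ hρ θ
    have h0 : (0:ℝ) ≤ ρ := (hr.le.trans hρ.1)
    exact ⟨by rw [abs_mul_exp h0]; exact hρ.1, by rw [abs_mul_exp h0]; exact hρ.2⟩
  have hAmeas : MeasurableSet A :=
    ((isClosed_Icc.preimage continuous_norm).measurableSet :
      MeasurableSet ((fun z : ℂ => ‖z‖) ⁻¹' Set.Icc r R))
  -- differentiability facts
  have hfc : ContinuousOn (fderiv ℝ f) U := hf.continuousOn_fderiv_of_isOpen hU (by norm_num)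
  have hfd : DifferentiableOn ℝ f U := hf.differentiableOn (by norm_num)
  have hdiff : ∀ z ∈ U, DifferentiableAt ℝ f z := fun z hz =>
    (hfd z hz).differentiableAt (hU.mem_nhds hz)
  -- continuity of g on U \ {0}
  have hgc : ContinuousOn g (U \ {0}) := by
    have h1 : ContinuousOn (fun z : ℂ => fderiv ℝ f z 1) (U \ {0}) :=
      (hfc.mono Set.diff_subset).clm_apply continuousOn_const
    have h2 : ContinuousOn (fun z : ℂ => fderiv ℝ f z Complex.I) (U \ {0}) :=
      (hfc.mono Set.diff_subset).clm_apply continuousOn_const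
    have hν : ∀ z ∈ U \ {0}, Complex.normSq z ≠ 0 := by
      intro z hz
      exact (Complex.normSq_pos.mpr (by simpa using hz.2)).ne'
    have hre : ContinuousOn (fun z : ℂ => -(z.re / Complex.normSq z)) (U \ {0}) :=
      (Complex.continuous_re.continuousOn.div Complex.continuous_normSq.continuousOn hν).neg
    have him : ContinuousOn (fun z : ℂ => -(z.im / Complex.normSq z)) (U \ {0}) :=
      (Complex.continuous_im.continuousOn.div Complex.continuous_normSq.continuousOn hν).neg
    apply ((h1.mul hre).add (h2.mul him)).congr
    intro z hz
    have hz0 : z ≠ 0 := by simpa using hz.2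
    rw [hg]
    unfold gradDot
    rw [fderiv_negLogAbs_apply z hz0, fderiv_negLogAbs_apply z hz0]
    simp [Complex.one_re, Complex.one_im, Complex.I_re, Complex.I_im]
  -- the polar-coordinates integrand
  set F : ℝ × ℝ → ℝ := fun p => p.1 • g (Complex.polarCoord.symm p) with hF
  have hsymmc : Continuous (fun p : ℝ × ℝ => Complex.polarCoord.symm p) := by
    simp only [Complex.polarCoord_symm_apply]
    fun_prop
  have hFcont : ContinuousOn F (Set.Icc r R ×ˢ Set.Icc (-π) π) := by
    apply ContinuousOn.smul continuousOn_fst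
    apply hgc.comp hsymmc.continuousOn
    intro p hp
    have hzA : Complex.polarCoord.symm p ∈ A := by
      rw [symm_eq']
      exact hmemA hp.1 p.2
    refine ⟨hsub hzA, ?_⟩
    simp only [Set.mem_singleton_iff]
    rw [symm_eq']
    exact mul_exp_ne_zero (hr.trans_le hp.1.1) p.2
  have hFint : IntegrableOn F (Set.Icc r R ×ˢ Set.Ioo (-π) π) :=
    (hFcont.integrableOn_compact (isCompact_Icc.prod isCompact_Icc)).mono_set
      (Set.prod_mono_right Set.Ioo_subset_Icc_self)
  set Φ : ℝ → ℝ := fun θ => f ((r : ℂ) * Complex.exp (Complex.I * θ)) -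
      f ((R : ℂ) * Complex.exp (Complex.I * θ)) with hΦ
  have key : ∫ z in A, g z = ∫ t in (0:ℝ)..(2 * π), Φ t := by
    calc ∫ z in A, g z = ∫ z, A.indicator g z := (integral_indicator hAmeas).symm
      _ = ∫ p in polarCoord.target, p.1 • A.indicator g (Complex.polarCoord.symm p) :=
          (Complex.integral_comp_polarCoord_symm _).symm
      _ = ∫ p in polarCoord.target,
            (Set.Icc r R ×ˢ (Set.univ : Set ℝ)).indicator F p := by
          apply setIntegral_congr_fun polarCoord.open_target.measurableSet
          intro p hp
          have hp1 : 0 < p.1 := hp.1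
          have habs : ‖Complex.polarCoord.symm p‖ = p.1 := by
            rw [Complex.norm_polarCoord_symm, abs_of_pos hp1]
          have hAiff : Complex.polarCoord.symm p ∈ A ↔ (r ≤ p.1 ∧ p.1 ≤ R) := by
            rw [hA, Set.mem_setOf_eq, habs]
          have hPiff : p ∈ Set.Icc r R ×ˢ (Set.univ : Set ℝ) ↔ (r ≤ p.1 ∧ p.1 ≤ R) := by
            simp [Set.mem_prod, Set.mem_Icc]
          show p.1 • A.indicator g (Complex.polarCoord.symm p)
              = (Set.Icc r R ×ˢ (Set.univ : Set ℝ)).indicator F p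
          by_cases hmem : r ≤ p.1 ∧ p.1 ≤ R
          · rw [Set.indicator_of_mem (hAiff.mpr hmem) g,
              Set.indicator_of_mem (hPiff.mpr hmem) F]
          · rw [Set.indicator_of_notMem (fun h => hmem (hAiff.mp h)) g,
              Set.indicator_of_notMem (fun h => hmem (hPiff.mp h)) F, smul_zero]
      _ = ∫ p in polarCoord.target ∩ (Set.Icc r R ×ˢ (Set.univ : Set ℝ)), F p :=
          setIntegral_indicator (measurableSet_Icc.prod MeasurableSet.univ)
      _ = ∫ p in Set.Icc r R ×ˢ Set.Ioo (-π) π, F p := by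
          have hseteq : Set.Ioi (0:ℝ) ∩ Set.Icc r R = Set.Icc r R :=
            Set.inter_eq_self_of_subset_right (fun x hx => hr.trans_le hx.1)
          congr 1
          rw [polarCoord_target, Set.prod_inter_prod, Set.inter_univ, hseteq]
      _ = ∫ θ in Set.Ioo (-π) π, ∫ ρ in Set.Icc r R, F (ρ, θ) := by
          rw [Measure.volume_eq_prod, ← Measure.prod_restrict]
          apply integral_prod_symm
          rw [Measure.prod_restrict, ← Measure.volume_eq_prod]
          exact hFint
      _ = ∫ θ in Set.Ioo (-π) π, Φ θ := by
          apply setIntegral_congr_fun measurableSet_Ioo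
          intro θ hθ
          show (∫ ρ in Set.Icc r R, F (ρ, θ)) = Φ θ
          have hder : ∀ x ∈ Set.uIcc r R,
              HasDerivAt (fun s : ℝ => -f ((s : ℂ) * Complex.exp (Complex.I * θ)))
                (F (x, θ)) x := by
            intro x hx
            rw [Set.uIcc_of_le hrR.le] at hx
            have hx0 : 0 < x := hr.trans_le hx.1
            have hd : DifferentiableAt ℝ f ((x : ℂ) * Complex.exp (Complex.I * θ)) :=
              hdiff _ (hsub (hmemA hx θ))
            have hFx : F (x, θ) = x * (gradDot f (fun w => -Real.log (‖w‖))
                ((x : ℂ) * Complex.exp (Complex.I * θ))) := by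
              show x • g (Complex.polarCoord.symm (x, θ)) = _
              rw [symm_eq, hg, smul_eq_mul]
            rw [hFx]
            exact radial_hasDerivAt f θ hx0 hd
          have hint : IntervalIntegrable (fun ρ => F (ρ, θ)) volume r R := by
            apply ContinuousOn.intervalIntegrable
            rw [Set.uIcc_of_le hrR.le]
            exact hFcont.comp (Continuous.continuousOn (by fun_prop))
              (fun x hx => ⟨hx, Set.Ioo_subset_Icc_self hθ⟩)
          rw [MeasureTheory.integral_Icc_eq_integral_Ioc,
            ← intervalIntegral.integral_of_le hrR.le,
            intervalIntegral.integral_eq_sub_of_hasDerivAt hder hint]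
          rw [hΦ]
          ring
      _ = ∫ θ in (-π)..π, Φ θ := by
          rw [intervalIntegral.integral_of_le (by linarith), integral_Ioc_eq_integral_Ioo]
      _ = ∫ t in (0:ℝ)..(2 * π), Φ t := by
          have hper : Function.Periodic Φ (2 * π) := by
            intro θ
            have hc : Complex.I * ((θ + 2 * π : ℝ) : ℂ)
                = Complex.I * θ + 2 * π * Complex.I := by push_cast; ring
            rw [hΦ]
            simp only [hc, Complex.exp_add, Complex.exp_two_pi_mul_I, mul_one]
          have h := hper.intervalIntegral_add_eq (-π) 0
          rw [zero_add] at h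
          rw [show -π + 2 * π = π by ring] at h
          exact h
  have hcontr : Continuous (fun t : ℝ => f ((r : ℂ) * Complex.exp (Complex.I * t))) := by
    apply (hf.continuousOn).comp_continuous (by fun_prop)
    intro t
    exact hsub (hmemA (Set.mem_Icc.mpr ⟨le_refl r, hrR.le⟩) t)
  have hcontR : Continuous (fun t : ℝ => f ((R : ℂ) * Complex.exp (Complex.I * t))) := by
    apply (hf.continuousOn).comp_continuous (by fun_prop)
    intro t
    exact hsub (hmemA (Set.mem_Icc.mpr ⟨hrR.le, le_refl R⟩) t)
  rw [key]
  simp only [hΦ]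
  rw [intervalIntegral.integral_sub (hcontr.intervalIntegrable _ _)
    (hcontR.intervalIntegrable _ _)]
  ring
end
end

section
/- For 0 < r₁ ≤ r₂ < 1, the Dirichlet inner product of the truncated logarithms satisfies (1/2π)∫_𝔻 ∇G_0^{r₁} · ∇G_0^{r₂} dA = −ln(r₂), where G_0^r(z) = −ln(max(r, |z|)). -/
noncomputable section
open MeasureTheory Real

/-- The distributional gradient of `G₀^r(z) = -ln(max(r,|z|))`, viewed as a vector in
`ℂ ≅ ℝ²`: it equals `-(x,y)/(x²+y²)` on `{r < |z| < 1}` and `0` on `{|z| ≤ r}`. -/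
def gradG0r (r : ℝ) (z : ℂ) : ℂ :=
    if r < ‖z‖ then -z / (‖z‖ : ℂ) ^ 2 else 0

/-- for `0 < r₁ ≤ r₂ < 1`,
`(1/2π) ∫_𝔻 ∇G₀^{r₁} · ∇G₀^{r₂} dA = -ln r₂`. -/
theorem dirichlet_G0r_pairing (r₁ r₂ : ℝ) (h₁ : 0 < r₁) (h₁₂ : r₁ ≤ r₂) (h₂ : r₂ < 1) :
    (1 / (2 * π)) * (∫ z in Metric.ball (0 : ℂ) 1,
        ((gradG0r r₁ z).re * (gradG0r r₂ z).re + (gradG0r r₁ z).im * (gradG0r r₂ z).im)) =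
    -Real.log r₂ := by
  have h₂0 : 0 < r₂ := h₁.trans_le h₁₂
  set g : ℝ → ℝ := fun t => if r₂ < t ∧ t < 1 then t⁻¹ * t⁻¹ else 0 with hg
  have key : (∫ z in Metric.ball (0 : ℂ) 1,
        ((gradG0r r₁ z).re * (gradG0r r₂ z).re + (gradG0r r₁ z).im * (gradG0r r₂ z).im))
      = ∫ z : ℂ, g ‖z‖ := by
    rw [← integral_indicator measurableSet_ball]
    congr 1
    ext z
    by_cases hz1 : z ∈ Metric.ball (0 : ℂ) 1
    · rw [Set.indicator_of_mem hz1]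
      simp only [Metric.mem_ball, dist_zero_right] at hz1
      by_cases hz2 : r₂ < ‖z‖
      · have hz1' : r₁ < ‖z‖ := lt_of_le_of_lt h₁₂ hz2
        have hzne : ‖z‖ ≠ 0 := (h₁.trans hz1').ne'
        simp only [gradG0r, if_pos hz2, if_pos hz1', hg]
        rw [if_pos ⟨hz2, hz1⟩]
        have habs : ‖-z / (‖z‖ : ℂ) ^ 2‖ = ‖z‖⁻¹ := by
          rw [norm_div, norm_neg, norm_pow, Complex.norm_real, norm_norm]
          field_simp
        rw [← Complex.normSq_apply, ← Complex.sq_norm, habs]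
        ring
      · simp [gradG0r, hz2, hg]
    · rw [Set.indicator_of_notMem hz1]
      simp only [Metric.mem_ball, dist_zero_right, not_lt] at hz1
      simp only [hg]
      rw [if_neg (by push_neg; intro _; simpa using hz1)]
  have hrad : ∫ z : ℂ, g ‖z‖ = 2 * π * ∫ y in Set.Ioi (0:ℝ), y ^ 1 * g y := by
    rw [integral_fun_norm_addHaar volume g]
    have hdim : Module.finrank ℝ ℂ = 2 := Complex.finrank_real_complex
    rw [hdim]
    have hball : volume.real (Metric.ball (0:ℂ) 1) = π := by
      rw [measureReal_def, Complex.volume_ball]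
      simp [ENNReal.toReal_mul]
    rw [hball]
    simp [smul_eq_mul, mul_assoc]
  have hind : ∫ y in Set.Ioi (0:ℝ), y ^ 1 * g y
      = ∫ y in Set.Ioo r₂ 1, y⁻¹ := by
    have step1 : ∫ y in Set.Ioi (0:ℝ), y ^ 1 * g y
        = ∫ y in Set.Ioi (0:ℝ), Set.indicator (Set.Ioo r₂ 1) (fun y => y⁻¹) y := by
      refine setIntegral_congr_fun measurableSet_Ioi (fun y hy => ?_)
      simp only [Set.mem_Ioi] at hy
      by_cases hmem : y ∈ Set.Ioo r₂ 1
      · rw [Set.indicator_of_mem hmem]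
        simp only [hg, pow_one]
        rw [if_pos ⟨hmem.1, hmem.2⟩]
        field_simp
      · rw [Set.indicator_of_notMem hmem]
        simp only [hg, pow_one]
        rw [if_neg (by simpa [Set.mem_Ioo] using hmem)]
        ring
    rw [step1, setIntegral_indicator measurableSet_Ioo,
      Set.inter_eq_right.2 (fun y (hy : y ∈ Set.Ioo r₂ 1) => Set.mem_Ioi.2 (h₂0.trans hy.1))]
  have hval : ∫ y in Set.Ioo r₂ 1, y⁻¹ = -Real.log r₂ := by
    rw [← integral_Ioc_eq_integral_Ioo, ← intervalIntegral.integral_of_le h₂.le,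
      integral_inv_of_pos h₂0 one_pos]
    simp [Real.log_div, h₂0.ne']
  rw [key, hrad, hind, hval]
  have hπ : π ≠ 0 := Real.pi_ne_zero
  field_simp
end
end

section
/- Let φ be a smooth compactly supported function on 𝔻 and 0 < r < 1. Then the average of φ on the circle of radius r, (1/2π)∫₀^{2π} φ(r e^{it}) dt, equals the Dirichlet inner product (1/2π)∫_𝔻 ∇G_0^r · ∇φ dA, where G_0^r(z) = −ln(max(r, |z|)). -/
noncomputable section
open MeasureTheory Real

/-- for a smooth compactly supported `φ` on `𝔻` and `0 < r < 1`, the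
average of `φ` on the circle of radius `r` equals the Dirichlet pairing of `G₀^r`
with `φ`. -/
theorem circle_average_eq_dirichlet_pairing (r : ℝ) (hr0 : 0 < r) (hr1 : r < 1)
    (φ : ℂ → ℝ) (hφ : ContDiff ℝ (⊤ : ℕ∞) φ) (hφs : HasCompactSupport φ)
    (hφD : tsupport φ ⊆ Metric.ball 0 1) :
    (1 / (2 * π)) * (∫ t in (0:ℝ)..(2 * π), φ ((r : ℂ) * Complex.exp (Complex.I * t))) =
    (1 / (2 * π)) * ∫ z in Metric.ball (0 : ℂ) 1,
        ((gradG0r r z).re * fderiv ℝ φ z 1 + (gradG0r r z).im * fderiv ℝ φ z Complex.I) := by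
  have hφd : Differentiable ℝ φ := hφ.differentiable (by simp)
  have hDcont : Continuous (fderiv ℝ φ) := hφ.continuous_fderiv (by simp)
  -- φ and its derivative vanish outside the unit ball
  have hts : ∀ z : ℂ, 1 ≤ ‖z‖ → z ∉ tsupport φ := by
    intro z hz h
    have := hφD h
    rw [Metric.mem_ball, Complex.dist_eq, sub_zero] at this
    linarith
  have hD0 : ∀ z : ℂ, 1 ≤ ‖z‖ → fderiv ℝ φ z = 0 := by
    intro z hz
    by_contra hne
    exact hts z hz (support_fderiv_subset ℝ hne)
  have hφ0 : ∀ z : ℂ, 1 ≤ ‖z‖ → φ z = 0 := fun z hz =>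
    image_eq_zero_of_notMem_tsupport (hts z hz)
  set f : ℂ → ℝ := fun z =>
    (gradG0r r z).re * fderiv ℝ φ z 1 + (gradG0r r z).im * fderiv ℝ φ z Complex.I with hf
  -- the polar-symm formula
  have hsymm : ∀ p : ℝ × ℝ, Complex.polarCoord.symm p = ↑p.1 * Complex.exp (↑p.2 * Complex.I) := by
    intro p
    rw [Complex.polarCoord_symm_apply, Complex.exp_mul_I]
    push_cast; ring
  -- Step 1: integral over the ball = integral over ℂ
  have step1 : (∫ z in Metric.ball (0 : ℂ) 1, f z) = ∫ z, f z := by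
    apply setIntegral_eq_integral_of_forall_compl_eq_zero
    intro z hz
    rw [Metric.mem_ball, Complex.dist_eq, sub_zero, not_lt] at hz
    simp [hf, hD0 z hz]
  -- Step 2: polar coordinates
  have step2 : (∫ z, f z) =
      ∫ p in polarCoord.target, p.1 • f (Complex.polarCoord.symm p) :=
    (Complex.integral_comp_polarCoord_symm f).symm
  set A : Set (ℝ × ℝ) := Set.Ioo r 1 ×ˢ Set.Ioo (-π) π with hA
  have hAmeas : MeasurableSet A := measurableSet_Ioo.prod measurableSet_Ioo
  -- Step 3: shrink the domain to A
  have step3 : (∫ p in polarCoord.target, p.1 • f (Complex.polarCoord.symm p)) =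
      ∫ p in A, p.1 • f (Complex.polarCoord.symm p) := by
    rw [← integral_indicator polarCoord.open_target.measurableSet, ← integral_indicator hAmeas]
    congr 1
    funext p
    by_cases hpA : p ∈ A
    · have hpT : p ∈ polarCoord.target := by
        rw [polarCoord_target]
        obtain ⟨h1, h2⟩ := hpA
        exact ⟨lt_trans hr0 h1.1, h2⟩
      rw [Set.indicator_of_mem hpA, Set.indicator_of_mem hpT]
    · rw [Set.indicator_of_notMem hpA]
      by_cases hpT : p ∈ polarCoord.target
      · rw [Set.indicator_of_mem hpT]
        rw [polarCoord_target] at hpT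
        have habs : ‖Complex.polarCoord.symm p‖ = p.1 := by
          rw [Complex.norm_polarCoord_symm, abs_of_pos hpT.1]
        have hp1 : ¬ (r < p.1 ∧ p.1 < 1) := by
          intro hc; exact hpA ⟨⟨hc.1, hc.2⟩, hpT.2⟩
        rcases not_and_or.mp hp1 with h | h
        · -- p.1 ≤ r : gradG0r vanishes
          have h0 : gradG0r r (Complex.polarCoord.symm p) = 0 := by
            unfold gradG0r
            rw [if_neg]; rw [habs]; exact h
          simp only [hf, h0, Complex.zero_re, Complex.zero_im, zero_mul, add_zero, smul_eq_mul,
            mul_zero]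
        · -- 1 ≤ p.1 : fderiv vanishes
          have h1 : (1:ℝ) ≤ ‖Complex.polarCoord.symm p‖ := by
            rw [habs]; exact not_lt.mp h
          simp only [hf, hD0 _ h1, ContinuousLinearMap.zero_apply, mul_zero, add_zero,
            smul_eq_mul]
      · rw [Set.indicator_of_notMem hpT]
  -- Step 4: compute the integrand on A
  set G : ℝ × ℝ → ℝ := fun p =>
    -(fderiv ℝ φ (↑p.1 * Complex.exp (↑p.2 * Complex.I)) (Complex.exp (↑p.2 * Complex.I))) with hG
  have step4 : (∫ p in A, p.1 • f (Complex.polarCoord.symm p)) = ∫ p in A, G p := by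
    apply setIntegral_congr_fun hAmeas
    intro p hp
    obtain ⟨⟨hpr, hp1⟩, _⟩ := hp
    have hppos : 0 < p.1 := lt_trans hr0 hpr
    set e : ℂ := Complex.exp (↑p.2 * Complex.I) with he
    have habse : ‖e‖ = 1 := Complex.norm_exp_ofReal_mul_I p.2
    set z : ℂ := Complex.polarCoord.symm p with hz
    have hze : z = ↑p.1 * e := hsymm p
    have habs : ‖z‖ = p.1 := by
      rw [hze, norm_mul, habse, Complex.norm_real, Real.norm_eq_abs, abs_of_pos hppos, mul_one]
    have hgr : gradG0r r z = -z / (↑p.1 : ℂ) ^ 2 := by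
      unfold gradG0r
      rw [if_pos (by rw [habs]; exact hpr), habs]
    -- real and imaginary parts
    have hre : (gradG0r r z).re = -z.re / p.1 ^ 2 := by
      rw [hgr]
      rw [show ((p.1 : ℂ))^2 = ((p.1^2 : ℝ) : ℂ) by push_cast; ring]
      rw [Complex.div_ofReal_re, Complex.neg_re]
    have him : (gradG0r r z).im = -z.im / p.1 ^ 2 := by
      rw [hgr]
      rw [show ((p.1 : ℂ))^2 = ((p.1^2 : ℝ) : ℂ) by push_cast; ring]
      rw [Complex.div_ofReal_im, Complex.neg_im]
    -- D z z = z.re * D z 1 + z.im * D z I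
    set D := fderiv ℝ φ z with hD
    have hlin : D z = z.re * D 1 + z.im * D Complex.I := by
      have : z = z.re • (1:ℂ) + z.im • Complex.I := by
        simp [Complex.real_smul, Complex.re_add_im]
      rw [show D z = D (z.re • (1:ℂ) + z.im • Complex.I) by rw [← this]]
      rw [map_add, D.map_smul, D.map_smul, smul_eq_mul, smul_eq_mul]
    have hDe : D z = p.1 * D e := by
      rw [show z = p.1 • e by rw [hze, Complex.real_smul], D.map_smul, smul_eq_mul]
    show p.1 • f z = G p
    rw [hf]
    simp only [hre, him, smul_eq_mul]
    have : p.1 * (-z.re / p.1 ^ 2 * D 1 + -z.im / p.1 ^ 2 * D Complex.I)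
        = -(z.re * D 1 + z.im * D Complex.I) / p.1 := by
      field_simp; ring
    rw [this, ← hlin, hDe, hG]
    simp only [← hze]
    field_simp
    rw [hD, hze]
  -- continuity and integrability of G
  have hGcont : Continuous G := by
    have h1 : Continuous fun p : ℝ × ℝ => (↑p.1 * Complex.exp (↑p.2 * Complex.I) : ℂ) := by
      fun_prop
    have h2 : Continuous fun p : ℝ × ℝ => (Complex.exp (↑p.2 * Complex.I) : ℂ) := by
      fun_prop
    exact ((hDcont.comp h1).clm_apply h2).neg
  have hGint : IntegrableOn G A := by
    refine (hGcont.continuousOn.integrableOn_compact (isCompact_Icc.prod isCompact_Icc)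
      (K := Set.Icc r 1 ×ˢ Set.Icc (-π) π)).mono_set ?_
    exact Set.prod_mono Set.Ioo_subset_Icc_self Set.Ioo_subset_Icc_self
  -- Step 5: Fubini and swap
  have hGint' : Integrable G
      (((volume : Measure ℝ).restrict (Set.Ioo r 1)).prod
        ((volume : Measure ℝ).restrict (Set.Ioo (-π) π))) := by
    rw [Measure.prod_restrict, ← Measure.volume_eq_prod]
    exact hGint
  have step5 : (∫ p in A, G p) =
      ∫ θ in Set.Ioo (-π) π, ∫ ρ in Set.Ioo r 1, G (ρ, θ) := by
    rw [hA, Measure.volume_eq_prod]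
    rw [MeasureTheory.setIntegral_prod G (by
      rw [IntegrableOn, ← Measure.volume_eq_prod]; exact hGint)]
    exact MeasureTheory.integral_integral_swap hGint'
  -- Step 6: radial FTC
  have step6 : ∀ θ : ℝ, (∫ ρ in Set.Ioo r 1, G (ρ, θ)) =
      φ (↑r * Complex.exp (↑θ * Complex.I)) := by
    intro θ
    set e : ℂ := Complex.exp (↑θ * Complex.I) with he
    have habse : ‖e‖ = 1 := Complex.norm_exp_ofReal_mul_I θ
    have hderiv : ∀ ρ : ℝ, HasDerivAt (fun ρ : ℝ => φ (↑ρ * e))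
        (fderiv ℝ φ (↑ρ * e) e) ρ := by
      intro ρ
      have h1 : HasDerivAt (fun ρ : ℝ => (↑ρ * e : ℂ)) e ρ := by
        simpa using (Complex.ofRealCLM.hasDerivAt (x := ρ)).mul_const e
      exact (hφd (↑ρ * e)).hasFDerivAt.comp_hasDerivAt ρ h1
    have hcont : Continuous fun ρ : ℝ => fderiv ℝ φ (↑ρ * e) e := by
      exact (hDcont.comp (by fun_prop)).clm_apply continuous_const
    have hFTC : (∫ ρ in r..1, fderiv ℝ φ (↑ρ * e) e) = φ ((1:ℝ) * e) - φ (↑r * e) := by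
      exact intervalIntegral.integral_eq_sub_of_hasDerivAt
        (f := fun ρ : ℝ => φ (↑ρ * e)) (fun x _ => hderiv x) (hcont.intervalIntegrable r 1)
    have hφe : φ ((1:ℝ) * e) = 0 := by
      apply hφ0
      rw [norm_mul, habse, Complex.norm_real]; norm_num
    calc (∫ ρ in Set.Ioo r 1, G (ρ, θ))
        = ∫ ρ in Set.Ioo r 1, -(fderiv ℝ φ (↑ρ * e) e) := rfl
      _ = -∫ ρ in Set.Ioo r 1, fderiv ℝ φ (↑ρ * e) e := integral_neg _
      _ = -∫ ρ in Set.Ioc r 1, fderiv ℝ φ (↑ρ * e) e := by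
          rw [integral_Ioc_eq_integral_Ioo]
      _ = -∫ ρ in r..1, fderiv ℝ φ (↑ρ * e) e := by
          rw [intervalIntegral.integral_of_le hr1.le]
      _ = φ (↑r * e) := by rw [hFTC, hφe]; ring
  -- Step 7: go from θ ∈ (-π, π) to t ∈ (0, 2π) by periodicity
  have step7 : (∫ θ in Set.Ioo (-π) π, φ (↑r * Complex.exp (↑θ * Complex.I))) =
      ∫ t in (0:ℝ)..(2*π), φ ((r:ℂ) * Complex.exp (Complex.I * t)) := by
    have hper : Function.Periodic (fun t : ℝ => φ (↑r * Complex.exp (↑t * Complex.I))) (2*π) := by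
      intro t
      simp only
      congr 2
      rw [show ((↑(t + 2*π) : ℂ) * Complex.I) = ↑t * Complex.I + 2*π*Complex.I by push_cast; ring]
      rw [Complex.exp_add, Complex.exp_two_pi_mul_I, mul_one]
    have h1 : (∫ θ in Set.Ioo (-π) π, φ (↑r * Complex.exp (↑θ * Complex.I))) =
        ∫ θ in (-π)..π, φ (↑r * Complex.exp (↑θ * Complex.I)) := by
      rw [intervalIntegral.integral_of_le (by linarith [pi_pos] : -π ≤ π),
        integral_Ioc_eq_integral_Ioo]
    rw [h1]
    have h2 := hper.intervalIntegral_add_eq (-π) 0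
    rw [show -π + 2*π = π by ring, zero_add] at h2
    rw [h2]
    congr 1
    funext t
    rw [mul_comm (↑t : ℂ) Complex.I]
  rw [step1, step2, step3, step4, step5]
  congr 1
  rw [show (∫ θ in Set.Ioo (-π) π, ∫ ρ in Set.Ioo r 1, G (ρ, θ)) =
      ∫ θ in Set.Ioo (-π) π, φ (↑r * Complex.exp (↑θ * Complex.I)) from
    setIntegral_congr_fun measurableSet_Ioo fun θ _ => step6 θ, step7]
end
end
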